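/- arXiv:2602.09623 — 2 statements merged into one kernel-verified Lean document; each statement's English description precedes it below -/
import Mathlib

section
/- Let G be a finite simple chordal graph and let t ≥ 2 be an integer. Then the t-clique clutter CH_t(G) is a chordal clutter: either CH_t(G) has no edges, or it admits a simplicial maximal subedge e such that the deletion CH_t(G) ∖ e is again a chordal clutter (and this recursion terminates in a clutter with no edges). -/
/-!
A finite chordal graph with an edge has a simplicial vertex `v` in its support (Dirac's lemma,
which rests on minimal separators of chordal graphs being cliques). Every `t`-clique through `v`
lies in the clique `N[v]`, so the `(t - 1)`-subsets of `N[v]` containing `v` can be deleted one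
at a time in colex order: when its turn comes, each of them is either simplicial or no longer a
maximal subedge. What is left is `CH_t(G - v)`, which is chordal by induction on the support.
-/

/-- A chordal graph: no induced cycle of length at least 4. -/
def IsChordalGraph {V : Type*} (G : SimpleGraph V) : Prop :=
  ∀ n, 4 ≤ n → ¬ ∃ f : Fin n ↪ V,
    ∀ i j, G.Adj (f i) (f j) ↔ (SimpleGraph.cycleGraph n).Adj i j

/-- `t`-diamond-free: no two distinct `t`-cliques intersecting in `t - 1` vertices. -/
def TDiamondFree {V : Type*} [DecidableEq V] (G : SimpleGraph V) (t : ℕ) : Prop :=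
  ¬ ∃ A B : Finset V, G.IsNClique t A ∧ G.IsNClique t B ∧ A ≠ B ∧ (A ∩ B).card = t - 1

/-- The `t`-clique clutter of a graph: edges are the `t`-cliques of `G`. -/
def tCliqueClutter {V : Type*} (G : SimpleGraph V) (t : ℕ) : Set (Finset V) :=
  {e : Finset V | G.IsNClique t e}

/-- The closed neighborhood `N_C[e]` of a `(t-1)`-subset `e` in a `t`-uniform
clutter `C`. -/
def clutterNbhd {V : Type*} [DecidableEq V] (C : Set (Finset V)) (e : Finset V) :
    Set V :=
  ↑e ∪ {v | insert v e ∈ C}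

/-- The deletion `C ∖ e`: the edges of `C` not containing `e`. -/
def clutterDel {V : Type*} (C : Set (Finset V)) (e : Finset V) : Set (Finset V) :=
  {F | F ∈ C ∧ ¬ e ⊆ F}

/-- A chordal `t`-uniform clutter: either there are no edges, or there is a
simplicial maximal subedge `e` (a `(t-1)`-set properly contained in some edge, all
`t`-subsets of whose closed neighborhood are edges) such that `C ∖ e` is again
chordal; the inductive definition forces the recursion to terminate in a clutter
with no edges. -/
inductive ChordalClutter {V : Type*} [DecidableEq V] (t : ℕ) : Set (Finset V) → Prop
  | no_edges {C : Set (Finset V)} (h : C = ∅) : ChordalClutter t C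
  | step {C : Set (Finset V)} (e : Finset V)
      (hcard : e.card = t - 1)
      (hmaximal : ∃ v, v ∉ e ∧ insert v e ∈ C)
      (hsimplicial : ∀ F : Finset V, F.card = t → (↑F : Set V) ⊆ clutterNbhd C e →
        F ∈ C)
      (hrec : ChordalClutter t (clutterDel C e)) : ChordalClutter t C

section Clutter

variable {V : Type*} {t : ℕ} {C : Set (Finset V)}

def clutterDelAll (C : Set (Finset V)) (D : Finset (Finset V)) : Set (Finset V) :=
  {F | F ∈ C ∧ ∀ e ∈ D, ¬ e ⊆ F}

variable [DecidableEq V]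

lemma clutterDelAll_insert (C : Set (Finset V)) (D : Finset (Finset V)) (e : Finset V) :
    clutterDelAll C (insert e D) = clutterDel (clutterDelAll C D) e := by
  ext F
  simp only [clutterDelAll, clutterDel, Set.mem_ofPred_eq, Finset.forall_mem_insert]
  tauto

lemma clutterDel_eq_self_of_not_maximal (hC : ∀ F ∈ C, F.card = t) {e : Finset V}
    (he : e.card = t - 1) (ht : 1 ≤ t) (hmax : ¬ ∃ v, v ∉ e ∧ insert v e ∈ C) :
    clutterDel C e = C := by
  refine Set.sep_eq_self_iff_mem_true.mpr fun F hF heF => hmax ?_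
  obtain ⟨v, hvF, hve⟩ := Finset.exists_of_ssubset
    (heF.ssubset_of_ne (by rintro rfl; have := hC _ hF; omega))
  refine ⟨v, hve, ?_⟩
  rwa [Finset.eq_of_subset_of_card_le (Finset.insert_subset hvF heF)
    (by rw [hC F hF, Finset.card_insert_of_notMem hve]; omega)]

end Clutter

section Colex

open Finset

variable {V : Type*} [LinearOrder V] {t : ℕ} {C : Set (Finset V)} {v : V} {K : Finset V}

def subedgesThrough (K : Finset V) (v : V) (t : ℕ) : Finset (Finset V) :=
  {e ∈ K.powersetCard (t - 1) | v ∈ e}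

lemma mem_subedgesThrough {e : Finset V} :
    e ∈ subedgesThrough K v t ↔ e ⊆ K ∧ e.card = t - 1 ∧ v ∈ e := by
  simp [subedgesThrough, mem_powersetCard, and_assoc]

lemma clutterDelAll_subedgesThrough (ht : 2 ≤ t) (hC : ∀ F ∈ C, F.card = t)
    (hvK : ∀ F ∈ C, v ∈ F → F ⊆ K) :
    clutterDelAll C (subedgesThrough K v t) = {F | F ∈ C ∧ v ∉ F} := by
  ext F
  refine and_congr_right fun hF => ⟨fun hdel hvF => ?_, fun hvF e he heF => ?_⟩
  · obtain ⟨u, huF, huv⟩ := F.exists_mem_ne (by rw [hC F hF]; omega) v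
    refine hdel (F.erase u) (mem_subedgesThrough.2 ⟨?_, ?_, ?_⟩) (F.erase_subset u)
    · exact (F.erase_subset u).trans (hvK F hF hvF)
    · rw [card_erase_of_mem huF, hC F hF]
    · exact mem_erase.2 ⟨huv.symm, hvF⟩
  · exact hvF (heF (mem_subedgesThrough.1 he).2.2)

lemma simplicial_of_colex_min (hK : ∀ F ⊆ K, F.card = t → F ∈ C)
    (hvK : ∀ F ∈ C, v ∈ F → F ⊆ K) {D : Finset (Finset V)} (hD : D ⊆ subedgesThrough K v t)
    {e : Finset V} (he : e ∈ subedgesThrough K v t) (hlt : ∀ e' ∈ D, toColex e' < toColex e)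
    (hmin : ∀ e' ∈ subedgesThrough K v t, toColex e' < toColex e → e' ∈ D)
    (F : Finset V) (hFt : F.card = t) (hFN : ↑F ⊆ clutterNbhd (clutterDelAll C D) e) :
    F ∈ clutterDelAll C D := by
  obtain ⟨heK, hecard, hve⟩ := mem_subedgesThrough.1 he
  have hnbhd : ∀ w ∈ F, w ∉ e → insert w e ∈ clutterDelAll C D := fun w hw hwe =>
    (hFN hw).resolve_left hwe
  -- otherwise the colex-smaller subedge `e - x + w` would already be deleted, yet it lies in the
  -- surviving edge `e + w`
  have hbig : ∀ w ∈ F, w ∉ e → ∀ x ∈ e, x ≠ v → x < w := by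
    intro w hw hwe x hxe hxv
    by_contra! hwx
    have hwx : w < x := lt_of_le_of_ne hwx (by rintro rfl; exact hwe hxe)
    have hwe' : w ∉ e.erase x := fun h => hwe (mem_of_mem_erase h)
    refine (hnbhd w hw hwe).2 (insert w (e.erase x)) (hmin _ ?_ ?_)
      (insert_subset_insert w (e.erase_subset x))
    · refine mem_subedgesThrough.2 ⟨insert_subset ?_ ((e.erase_subset x).trans heK), ?_,
        mem_insert_of_mem (mem_erase.2 ⟨hxv.symm, hve⟩)⟩
      · exact hvK _ (hnbhd w hw hwe).1 (mem_insert_of_mem hve) (mem_insert_self w e)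
      · have := card_pos.2 ⟨x, hxe⟩
        rw [card_insert_of_notMem hwe', card_erase_of_mem hxe, hecard]
        omega
    · conv_rhs => rw [← insert_erase hxe]
      exact (Colex.insert_lt_insert hwe' (notMem_erase x e)).2 hwx
  have hFK : F ⊆ K := fun w hw => by
    by_cases hwe : w ∈ e
    · exact heK hwe
    · exact hvK _ (hnbhd w hw hwe).1 (mem_insert_of_mem hve) (mem_insert_self w e)
  refine ⟨hK F hFK hFt, fun e' he'D he'F => ?_⟩
  obtain ⟨he'K, he'card, hve'⟩ := mem_subedgesThrough.1 (hD he'D)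
  obtain ⟨k, hke, hke', hk⟩ := Colex.toColex_lt_toColex_iff_exists_forall_lt.1 (hlt e' he'D)
  obtain ⟨a, hae', hae⟩ := not_subset.1 fun h : e' ⊆ e =>
    (hlt e' he'D).ne (congrArg toColex (eq_of_subset_of_card_le h (by omega)))
  exact lt_asymm (hk a hae' hae)
    (hbig a (he'F hae') hae k hke (by rintro rfl; exact hke' hve'))

lemma chordalClutter_clutterDelAll (ht : 2 ≤ t) (hC : ∀ F ∈ C, F.card = t)
    (hK : ∀ F ⊆ K, F.card = t → F ∈ C) (hvK : ∀ F ∈ C, v ∈ F → F ⊆ K)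
    (h : ChordalClutter t {F | F ∈ C ∧ v ∉ F}) {D : Finset (Finset V)}
    (hD : D ⊆ subedgesThrough K v t)
    (hdown : ∀ e ∈ D, ∀ e' ∈ subedgesThrough K v t, toColex e' < toColex e → e' ∈ D) :
    ChordalClutter t (clutterDelAll C D) := by
  set E := subedgesThrough K v t
  induction hn : (E \ D).card generalizing D with
  | zero =>
    rwa [Finset.Subset.antisymm hD (sdiff_eq_empty_iff_subset.1 (card_eq_zero.1 hn)),
      clutterDelAll_subedgesThrough ht hC hvK]
  | succ n ih =>
    obtain ⟨e, heED, hemin⟩ := exists_min_image (E \ D) toColex (card_pos.1 (by omega))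
    obtain ⟨heE, heD⟩ := mem_sdiff.1 heED
    have hlt : ∀ e' ∈ D, toColex e' < toColex e := fun e' he'D =>
      lt_of_not_ge fun hle => heD <| hle.eq_or_lt.elim
        (fun h => toColex_inj.1 h ▸ he'D) (hdown e' he'D e heE)
    have hmin : ∀ e' ∈ E, toColex e' < toColex e → e' ∈ D := fun e' he'E h' => by
      by_contra he'D
      exact (hemin e' (mem_sdiff.2 ⟨he'E, he'D⟩)).not_gt h'
    have hrec := ih (insert_subset heE hD) (fun e₁ he₁ e' he' h' => by
        rcases mem_insert.1 he₁ with rfl | he₁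
        · exact mem_insert_of_mem (hmin e' he' h')
        · exact mem_insert_of_mem (hdown e₁ he₁ e' he' h'))
      (by rw [sdiff_insert, card_erase_of_mem heED, hn]; rfl)
    rw [clutterDelAll_insert] at hrec
    have hecard := (mem_subedgesThrough.1 heE).2.1
    by_cases hmax : ∃ w, w ∉ e ∧ insert w e ∈ clutterDelAll C D
    · exact .step e hecard hmax (simplicial_of_colex_min hK hvK hD heE hlt hmin) hrec
    · rwa [clutterDel_eq_self_of_not_maximal (fun F hF => hC F hF.1) hecard (by omega) hmax]
        at hrec

theorem ChordalClutter.of_simplicial_vertex (ht : 2 ≤ t) (hC : ∀ F ∈ C, F.card = t)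
    (hK : ∀ F ⊆ K, F.card = t → F ∈ C) (hvK : ∀ F ∈ C, v ∈ F → F ⊆ K)
    (h : ChordalClutter t {F | F ∈ C ∧ v ∉ F}) : ChordalClutter t C := by
  simpa [clutterDelAll] using
    chordalClutter_clutterDelAll ht hC hK hvK h (D := ∅) (Finset.empty_subset _) (by simp)

end Colex

namespace SimpleGraph

variable {V : Type*} {G H : SimpleGraph V} {s t : Set V} {u v x y : V}

/-- The spanning version of `G.induce s`: vertices outside `s` become isolated. -/
def restrict (G : SimpleGraph V) (s : Set V) : SimpleGraph V where
  Adj x y := x ∈ s ∧ y ∈ s ∧ G.Adj x y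
  symm := ⟨fun _ _ h => ⟨h.2.1, h.1, h.2.2.symm⟩⟩
  loopless := ⟨fun x h => G.loopless.irrefl x h.2.2⟩

lemma restrict_le : G.restrict s ≤ G := fun _ _ h => h.2.2

lemma restrict_mono (h : s ⊆ t) : G.restrict s ≤ G.restrict t :=
  fun _ _ hxy => ⟨h hxy.1, h hxy.2.1, hxy.2.2⟩

lemma Reachable.mem_of_forall_adj_mem (hs : ∀ x y, x ∈ s → H.Adj x y → y ∈ s)
    (h : H.Reachable x y) (hx : x ∈ s) : y ∈ s := by
  obtain ⟨p⟩ := h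
  induction p with
  | nil => exact hx
  | cons hadj _ ih => exact ih (hs _ _ hx hadj)

lemma Reachable.mem_of_restrict (h : (G.restrict s).Reachable x y) (hx : x ∈ s) : y ∈ s :=
  h.mem_of_forall_adj_mem (H := G.restrict s) (fun _ _ _ hadj => hadj.2.1) hx

lemma Reachable.restrict_setOf_reachable (h : (G.restrict s).Reachable x y) :
    (G.restrict {z | (G.restrict s).Reachable x z}).Reachable x y := by
  set A := {z | (G.restrict s).Reachable x z}
  refine h.mem_of_forall_adj_mem (H := G.restrict s) (s := {z | (G.restrict A).Reachable x z})
    (fun z w hz hzw => ?_) (Reachable.refl x)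
  have hzA : (G.restrict s).Reachable x z := hz.mem_of_restrict (Reachable.refl x)
  exact hz.trans (Adj.reachable ⟨hzA, hzA.trans hzw.reachable, hzw.2.2⟩)

lemma Walk.getVert_mem_of_restrict (p : (G.restrict s).Walk u v) (hv : v ∈ s) (i : ℕ) :
    p.getVert i ∈ s := by
  rcases lt_or_ge i p.length with hi | hi
  · exact (p.adj_getVert_succ hi).1
  · rwa [p.getVert_of_length_le hi]

lemma Walk.not_adj_getVert_of_length_eq_dist {p : H.Walk u v} (hp : p.length = H.dist u v)
    {i j : ℕ} (hij : i + 1 < j) (hj : j ≤ p.length) : ¬ H.Adj (p.getVert i) (p.getVert j) := by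
  intro hadj
  have := dist_le ((p.take i).append (.cons hadj (p.drop j)))
  simp only [Walk.length_append, Walk.length_cons, Walk.take_length, Walk.drop_length] at this
  omega

lemma Reachable.exists_chordless_path {A : Set V} (h : (G.restrict (A ∪ {x, y})).Reachable x y)
    (hxy : x ≠ y) (hnadj : ¬ G.Adj x y) :
    ∃ p : G.Walk x y, 2 ≤ p.length ∧ (∀ i, 0 < i → i < p.length → p.getVert i ∈ A) ∧
      (∀ i j, i < j → j ≤ p.length → p.getVert i ≠ p.getVert j) ∧
      (∀ i j, i + 1 < j → j ≤ p.length → ¬ G.Adj (p.getVert i) (p.getVert j)) := by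
  obtain ⟨q, hq⟩ := h.exists_walk_length_eq_dist
  have hinj : ∀ i j, i < j → j ≤ q.length → q.getVert i ≠ q.getVert j := fun i j hij hj heq =>
    hij.ne ((q.isPath_of_length_eq_dist hq).getVert_injOn (by simp; omega) (by simpa) heq)
  have hmem := q.getVert_mem_of_restrict (by simp)
  have hget (i : ℕ) : (q.mapLe restrict_le).getVert i = q.getVert i := by simp
  refine ⟨q.mapLe restrict_le, ?_, fun i hi hin => ?_, ?_, fun i j hij hj hadj => ?_⟩
  · simp only [Walk.length_mapLe]
    by_contra! hlt
    interval_cases hl : q.length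
    · exact hxy (Walk.eq_of_length_eq_zero hl)
    · exact hnadj (restrict_le (Walk.adj_of_length_eq_one hl))
  · simp only [Walk.length_mapLe, hget] at hin ⊢
    refine (hmem i).resolve_right ?_
    rintro (hx | hy)
    · exact hinj 0 i hi hin.le (by rw [q.getVert_zero, hx])
    · exact hinj i _ hin le_rfl (by rw [q.getVert_length, hy])
  · simpa only [Walk.length_mapLe, hget] using hinj
  · simp only [Walk.length_mapLe, hget] at hadj hj
    exact q.not_adj_getVert_of_length_eq_dist hq hij hj ⟨hmem i, hmem j, hadj⟩

lemma exists_adj_of_reachable_restrict_insert {U : Set V} {a b : V} (ha : a ∈ U)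
    (hsep : ¬ (G.restrict U).Reachable a b) (hx : (G.restrict (insert x U)).Reachable a b) :
    ∃ z, (G.restrict U).Reachable a z ∧ G.Adj x z := by
  by_contra! hno
  refine hsep (hx.mem_of_forall_adj_mem (H := G.restrict (insert x U))
    (s := {z | (G.restrict U).Reachable a z}) (fun z w hz hzw => ?_) (Reachable.refl a))
  rcases hzw.2.1 with rfl | hw
  · exact absurd hzw.2.2.symm (hno z hz)
  · exact hz.trans (Adj.reachable (G := G.restrict U) ⟨hz.mem_of_restrict ha, hw, hzw.2.2⟩)

lemma exists_minimal_separator [DecidableEq V] {s : Finset V} {a b : V} (hab : a ≠ b)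
    (hnab : ¬ G.Adj a b) :
    ∃ S ⊆ s \ {a, b}, ¬ (G.restrict ↑(s \ S)).Reachable a b ∧
      ∀ x ∈ (S : Set V), (G.restrict (insert x ↑(s \ S))).Reachable a b := by
  classical
  let Sep (S : Finset V) : Prop := ¬ (G.restrict ↑(s \ S)).Reachable a b
  have hfull : Sep (s \ {a, b}) := fun h => hab <| Eq.symm <|
    h.mem_of_forall_adj_mem (H := G.restrict _) (s := {a}) (fun z w hz hzw => by
      obtain ⟨-, hw, hzw⟩ := hzw
      rw [Set.mem_singleton_iff.1 hz] at hzw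
      simp only [Finset.coe_sdiff, Set.mem_sdiff, Finset.mem_coe, Finset.mem_insert,
        Finset.mem_singleton, not_and, not_not] at hw
      rcases hw.2 hw.1 with rfl | rfl
      exacts [absurd hzw (G.loopless.irrefl _), absurd hzw hnab]) rfl
  obtain ⟨S, hS, hSmin⟩ := Finset.exists_min_image ((s \ {a, b}).powerset.filter Sep)
    Finset.card ⟨_, Finset.mem_filter.2 ⟨Finset.mem_powerset_self _, hfull⟩⟩
  obtain ⟨hSsub, hSsep⟩ := Finset.mem_filter.1 hS
  refine ⟨S, Finset.mem_powerset.1 hSsub, hSsep, fun x hx => ?_⟩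
  by_contra h
  refine (hSmin (S.erase x) (Finset.mem_filter.2 ⟨Finset.mem_powerset.2
    ((S.erase_subset x).trans (Finset.mem_powerset.1 hSsub)), ?_⟩)).not_gt
    (Finset.card_erase_lt_of_mem hx)
  have hxs : x ∈ s := (Finset.mem_sdiff.1 (Finset.mem_powerset.1 hSsub hx)).1
  convert h using 3
  ext z
  by_cases hzx : z = x <;> simp [hzx, hxs, Finset.mem_coe.1 hx]

def IsSimplicialIn (G : SimpleGraph V) (s : Set V) (u : V) : Prop :=
  G.IsClique (G.neighborSet u ∩ s)

lemma IsSimplicialIn.of_neighborSet_inter_subset {s' : Set V} (hu : G.IsSimplicialIn s' u)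
    (h : G.neighborSet u ∩ s ⊆ s') : G.IsSimplicialIn s u :=
  hu.subset (Set.subset_inter Set.inter_subset_left h)

lemma exists_isSimplicialIn_of_isClique [DecidableEq V] {C S : Finset V}
    (hS : G.IsClique (S : Set V)) {c : V} (hc : c ∈ C)
    (h : G.IsClique (↑(C ∪ S) : Set V) ∨ ∃ u ∈ C ∪ S, ∃ w ∈ C ∪ S, u ≠ w ∧ ¬ G.Adj u w ∧
      G.IsSimplicialIn ↑(C ∪ S) u ∧ G.IsSimplicialIn ↑(C ∪ S) w) :
    ∃ u ∈ C, G.IsSimplicialIn ↑(C ∪ S) u := by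
  rcases h with h | ⟨u, hu, w, hw, huw, hnadj, hsu, hsw⟩
  · exact ⟨c, hc, h.subset Set.inter_subset_right⟩
  · by_cases huS : u ∈ S
    · exact ⟨w, (Finset.mem_union.1 hw).resolve_right fun hwS => hnadj (hS huS hwS huw), hsw⟩
    · exact ⟨u, (Finset.mem_union.1 hu).resolve_right huS, hsu⟩

end SimpleGraph

namespace IsChordalGraph

open SimpleGraph

variable {V : Type*} {G : SimpleGraph V} {u x y : V}

lemma exists_chord (hG : IsChordalGraph G) (c : G.Walk u u) (hc : 4 ≤ c.length)
    (hinj : ∀ i j, i < j → j < c.length → c.getVert i ≠ c.getVert j) :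
    ∃ i j, i + 1 < j ∧ j < c.length ∧ (0 < i ∨ j + 1 < c.length) ∧
      G.Adj (c.getVert i) (c.getVert j) := by
  by_contra! hno
  set n := c.length with hn
  have hwrap : G.Adj (c.getVert 0) (c.getVert (n - 1)) := by
    have := c.adj_getVert_succ (i := n - 1) (by omega)
    rw [Nat.sub_add_cancel (by omega), c.getVert_length] at this
    rw [c.getVert_zero]
    exact this.symm
  have hadj : ∀ a b, a < n → b < n → (G.Adj (c.getVert a) (c.getVert b) ↔
      b = a + 1 ∨ a = b + 1 ∨ (a = 0 ∧ b = n - 1) ∨ (b = 0 ∧ a = n - 1)) := by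
    intro a b ha hb
    constructor
    · intro h
      rcases lt_trichotomy a b with hab | rfl | hab
      · by_contra! hne
        exact hno a b (by omega) hb (by omega) h
      · exact absurd h (G.loopless.irrefl _)
      · by_contra! hne
        exact hno b a (by omega) ha (by omega) h.symm
    · rintro (rfl | rfl | ⟨rfl, rfl⟩ | ⟨rfl, rfl⟩)
      · exact c.adj_getVert_succ (by omega)
      · exact (c.adj_getVert_succ (by omega)).symm
      · exact hwrap
      · exact hwrap.symm
  have hf : Function.Injective fun i : Fin n => c.getVert i := by
    intro i j hij
    by_contra hne
    rcases lt_or_gt_of_ne (Fin.val_ne_of_ne hne) with h | h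
    · exact hinj _ _ h j.isLt hij
    · exact hinj _ _ h i.isLt hij.symm
  refine hG n hc ⟨⟨_, hf⟩, fun i j => ?_⟩
  have hsub (a b : Fin n) :
      ((a - b : Fin n) : ℕ) = if b.val ≤ a.val then a.val - b.val else n + a.val - b.val := by
    split_ifs with h
    exacts [Fin.coe_sub_iff_le.2 h, Fin.coe_sub_iff_lt.2 (not_le.1 h)]
  rw [cycleGraph_adj', hsub, hsub]
  simp only [Function.Embedding.coeFn_mk, hadj i j i.isLt j.isLt]
  have := i.isLt
  have := j.isLt
  split_ifs <;> omega

/-- Chordless `x`–`y` paths through `A` and through `B` close up to a cycle whose only possible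
chord is `xy`. -/
theorem adj_of_reachable_restrict (hG : IsChordalGraph G) {A B : Set V}
    (hAB : Disjoint A B) (hnadj : ∀ a ∈ A, ∀ b ∈ B, ¬ G.Adj a b) (hxy : x ≠ y) (hxB : x ∉ B)
    (hA : (G.restrict (A ∪ {x, y})).Reachable x y)
    (hB : (G.restrict (B ∪ {x, y})).Reachable x y) : G.Adj x y := by
  by_contra hxy'
  obtain ⟨p, hp2, hpA, hpinj, hpch⟩ := hA.exists_chordless_path hxy hxy'
  obtain ⟨q, hq2, hqB, hqinj, hqch⟩ :=
    (by rw [Set.pair_comm]; exact hB.symm : (G.restrict (B ∪ {y, x})).Reachable y x)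
      |>.exists_chordless_path hxy.symm (fun h => hxy' h.symm)
  have hcp (k : ℕ) (hk : k ≤ p.length) : (p.append q).getVert k = p.getVert k := by
    simp [Walk.getVert_append', hk]
  have hcq (k : ℕ) (hk : p.length ≤ k) : (p.append q).getVert k = q.getVert (k - p.length) := by
    simp [Walk.getVert_append, not_lt.2 hk]
  have hinj : ∀ i j, i < j → j < (p.append q).length →
      (p.append q).getVert i ≠ (p.append q).getVert j := by
    intro i j hij hjn
    rw [Walk.length_append] at hjn
    rcases le_or_gt j p.length with hj | hj
    · rw [hcp i (by omega), hcp j hj]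
      exact hpinj i j hij hj
    rcases le_or_gt p.length i with hi | hi
    · rw [hcq i hi, hcq j (by omega)]
      exact hqinj (i - p.length) (j - p.length) (by omega) (by omega)
    rw [hcp i hi.le, hcq j hj.le]
    have hjB := hqB (j - p.length) (by omega) (by omega)
    rcases Nat.eq_zero_or_pos i with rfl | hi0
    · rw [p.getVert_zero]
      exact fun h => hxB (h ▸ hjB)
    · exact hAB.ne_of_mem (hpA i hi0 hi) hjB
  obtain ⟨i, j, hij, hjn, hwrap, hadj⟩ :=
    hG.exists_chord (p.append q) (by rw [Walk.length_append]; omega) hinj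
  rw [Walk.length_append] at hjn hwrap
  rcases le_or_gt j p.length with hj | hj
  · rw [hcp i (by omega), hcp j hj] at hadj
    exact hpch i j hij hj hadj
  rcases le_or_gt p.length i with hi | hi
  · rw [hcq i hi, hcq j (by omega)] at hadj
    exact hqch (i - p.length) (j - p.length) (by omega) (by omega) hadj
  rw [hcp i hi.le, hcq j hj.le] at hadj
  rcases Nat.eq_zero_or_pos i with rfl | hi0
  · have := hqch (j - p.length) q.length (by omega) le_rfl
    rw [q.getVert_length] at this
    rw [p.getVert_zero] at hadj
    exact this hadj.symm
  · exact hnadj _ (hpA i hi0 hi) _ (hqB (j - p.length) (by omega) (by omega)) hadj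

theorem isClique_of_minimal_separator (hG : IsChordalGraph G)
    {U S : Set V} {a b : V} (ha : a ∈ U) (hb : b ∈ U) (hSU : Disjoint S U)
    (hsep : ¬ (G.restrict U).Reachable a b)
    (hmin : ∀ x ∈ S, (G.restrict (insert x U)).Reachable a b) : G.IsClique S := by
  intro x hx y hy hxy
  have hcomp (c : V) (hc : c ∈ U) : {z | (G.restrict U).Reachable c z} ⊆ U :=
    fun _ hz => hz.mem_of_restrict hc
  have hthrough (c d : V) (hc : c ∈ U) (hcd : ¬ (G.restrict U).Reachable c d)
      (hmin : ∀ x ∈ S, (G.restrict (insert x U)).Reachable c d) :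
      (G.restrict ({z | (G.restrict U).Reachable c z} ∪ {x, y})).Reachable x y := by
    obtain ⟨z, hz, hxz⟩ := exists_adj_of_reachable_restrict_insert hc hcd (hmin x hx)
    obtain ⟨z', hz', hyz'⟩ := exists_adj_of_reachable_restrict_insert hc hcd (hmin y hy)
    have hzz' := hz.restrict_setOf_reachable.symm.trans hz'.restrict_setOf_reachable
    exact (Adj.reachable (G := G.restrict _) ⟨Or.inr (by simp), Or.inl hz, hxz⟩).trans
      ((hzz'.mono (restrict_mono Set.subset_union_left)).trans
        (Adj.reachable (G := G.restrict _) ⟨Or.inl hz', Or.inr (by simp), hyz'.symm⟩))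
  refine hG.adj_of_reachable_restrict ?_ ?_ hxy ?_ (hthrough a b ha hsep hmin)
    (hthrough b a hb (fun h => hsep h.symm) fun x hx => (hmin x hx).symm)
  · exact Set.disjoint_left.2 fun z hza hzb => hsep (hza.trans (Reachable.symm hzb))
  · exact fun z hza w hwb hzw => hsep <| hza.trans <|
      (Adj.reachable (G := G.restrict U) ⟨hcomp a ha hza, hcomp b hb hwb, hzw⟩).trans hwb.symm
  · exact fun hxb => Set.disjoint_left.1 hSU hx (hcomp b hb hxb)

/-- Dirac's lemma, for the subgraph induced on `s`. -/
theorem isClique_or_exists_isSimplicialIn (hG : IsChordalGraph G) (s : Finset V) :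
    G.IsClique (s : Set V) ∨ ∃ u ∈ s, ∃ w ∈ s, u ≠ w ∧ ¬ G.Adj u w ∧
      G.IsSimplicialIn s u ∧ G.IsSimplicialIn s w := by
  classical
  induction s using Finset.strongInduction with | H s ih =>
  by_cases hs : G.IsClique (s : Set V)
  · exact .inl hs
  right
  obtain ⟨a, ha, b, hb, hab, hnab⟩ : ∃ a ∈ s, ∃ b ∈ s, a ≠ b ∧ ¬ G.Adj a b := by
    simpa [IsClique, Set.Pairwise] using hs
  obtain ⟨S, hSsub, hSsep, hmin⟩ := exists_minimal_separator (s := s) hab hnab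
  have hU {c : V} (hc : c ∈ s) (hcS : c ∉ S) : c ∈ (↑(s \ S) : Set V) := by simp [hc, hcS]
  have haS : a ∉ S := fun h => by simpa using hSsub h
  have hbS : b ∉ S := fun h => by simpa using hSsub h
  have hSclique := hG.isClique_of_minimal_separator (hU ha haS) (hU hb hbS)
    (Finset.disjoint_coe.2 Finset.disjoint_sdiff) hSsep hmin
  -- induction on `C ∪ S ⊂ s` for the component `C` of `c` in `s \ S`: the neighbours in `s` of a
  -- vertex of `C` all lie in `C ∪ S`
  have hcomp (c d : V) (hc : c ∈ s) (hcS : c ∉ S) (hd : d ∈ s) (hdS : d ∉ S)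
      (hcd : ¬ (G.restrict ↑(s \ S)).Reachable c d) :
      ∃ u, (G.restrict ↑(s \ S)).Reachable c u ∧ G.IsSimplicialIn s u := by
    set C := s.filter fun z => (G.restrict ↑(s \ S)).Reachable c z
    have hCS : C ∪ S ⊂ s := (Finset.ssubset_iff_of_subset (Finset.union_subset
      (Finset.filter_subset _ _) (hSsub.trans Finset.sdiff_subset))).2 ⟨d, hd, by
        simp only [Finset.mem_union, Finset.mem_filter, not_or]
        exact ⟨fun h => hcd h.2, hdS⟩⟩
    have hcC : c ∈ C := Finset.mem_filter.2 ⟨hc, Reachable.refl c⟩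
    obtain ⟨u, huC, hu⟩ := exists_isSimplicialIn_of_isClique hSclique hcC (ih _ hCS)
    have hcu := (Finset.mem_filter.1 huC).2
    refine ⟨u, hcu, hu.of_neighborSet_inter_subset fun z ⟨hzu, hzs⟩ => ?_⟩
    by_cases hzS : z ∈ S
    · exact Finset.mem_union_right _ hzS
    · exact Finset.mem_union_left _ (Finset.mem_filter.2 ⟨hzs, hcu.trans <|
        Adj.reachable (G := G.restrict _) ⟨hcu.mem_of_restrict (hU hc hcS), hU hzs hzS, hzu⟩⟩)
  obtain ⟨u, hau, hu⟩ := hcomp a b ha haS hb hbS hSsep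
  obtain ⟨w, hbw, hw⟩ := hcomp b a hb hbS ha haS fun h => hSsep h.symm
  have hus := hau.mem_of_restrict (hU ha haS)
  have hws := hbw.mem_of_restrict (hU hb hbS)
  refine ⟨u, (Finset.mem_sdiff.1 hus).1, w, (Finset.mem_sdiff.1 hws).1, ?_, fun huw => ?_, hu, hw⟩
  · rintro rfl
    exact hSsep (hau.trans hbw.symm)
  · exact hSsep (hau.trans ((Adj.reachable (G := G.restrict _) ⟨hus, hws, huw⟩).trans hbw.symm))

lemma deleteIncidenceSet (hG : IsChordalGraph G) (v : V) :
    IsChordalGraph (G.deleteIncidenceSet v) := by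
  rintro n hn ⟨f, hf⟩
  have hfv (i : Fin n) : f i ≠ v := by
    have : NeZero n := ⟨by omega⟩
    have hi : (cycleGraph n).Adj i (i + 1) := by
      rw [cycleGraph_adj']
      right
      simp [Nat.mod_eq_of_lt (by omega : 1 < n)]
    exact (deleteIncidenceSet_adj.1 ((hf i (i + 1)).2 hi)).2.1
  refine hG n hn ⟨f, fun i j => ?_⟩
  rw [← hf, deleteIncidenceSet_adj]
  exact ⟨fun h => ⟨h, hfv i, hfv j⟩, fun h => h.1⟩

lemma exists_isClique_neighborSet [Finite V] (hG : IsChordalGraph G)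
    (h : G.support.Nonempty) : ∃ v ∈ G.support, G.IsClique (G.neighborSet v) := by
  have hN (v : V) : G.neighborSet v ⊆ G.support := fun w hw => ⟨v, hw.symm⟩
  classical
  rcases hG.isClique_or_exists_isSimplicialIn (Set.toFinite G.support).toFinset with
    hs | ⟨u, hu, -, -, -, -, hsu, -⟩
  · obtain ⟨v, hv⟩ := h
    exact ⟨v, hv, hs.subset (by simpa using hN v)⟩
  · exact ⟨u, by simpa using hu, hsu.subset (Set.subset_inter le_rfl (by simpa using hN u))⟩

end IsChordalGraph

section CliqueClutter

open SimpleGraph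

variable {V : Type*} {G : SimpleGraph V} {t : ℕ}

lemma tCliqueClutter_deleteIncidenceSet (ht : 2 ≤ t) (v : V) :
    tCliqueClutter (G.deleteIncidenceSet v) t = {F | F ∈ tCliqueClutter G t ∧ v ∉ F} := by
  ext F
  simp only [tCliqueClutter, Set.mem_ofPred_eq, isNClique_iff]
  constructor
  · rintro ⟨hF, hcard⟩
    refine ⟨⟨hF.mono (G.deleteIncidenceSet_le v), hcard⟩, fun hv => ?_⟩
    obtain ⟨u, hu, huv⟩ := F.exists_mem_ne (by omega) v
    exact (deleteIncidenceSet_adj.1 (hF hv hu huv.symm)).2.1 rfl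
  · rintro ⟨⟨hF, hcard⟩, hv⟩
    refine ⟨fun a ha b hb hab => deleteIncidenceSet_adj.2 ⟨hF ha hb hab, ?_, ?_⟩, hcard⟩
    · rintro rfl
      exact hv ha
    · rintro rfl
      exact hv hb

variable [LinearOrder V] [Finite V]

lemma chordalClutter_of_deleteIncidenceSet (ht : 2 ≤ t) {v : V}
    (hv : G.IsClique (G.neighborSet v))
    (h : ChordalClutter t (tCliqueClutter (G.deleteIncidenceSet v) t)) :
    ChordalClutter t (tCliqueClutter G t) := by
  set K := (Set.toFinite (insert v (G.neighborSet v))).toFinset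
  have hK : G.IsClique (K : Set V) := by
    simpa [K] using isClique_insert.2 ⟨hv, fun _ hb _ => hb⟩
  refine ChordalClutter.of_simplicial_vertex (K := K) (v := v) ht (fun F hF => hF.card_eq)
    (fun F hFK hcard => ⟨hK.subset hFK, hcard⟩) (fun F hF hvF w hw => ?_)
    (tCliqueClutter_deleteIncidenceSet ht v ▸ h)
  simp only [K, Set.Finite.mem_toFinset, Set.mem_insert_iff, mem_neighborSet]
  by_cases hwv : w = v
  · exact .inl hwv
  · exact .inr (hF.isClique hvF hw (Ne.symm hwv))

theorem IsChordalGraph.chordalClutter_tCliqueClutter (hG : IsChordalGraph G) (ht : 2 ≤ t) :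
    ChordalClutter t (tCliqueClutter G t) := by
  induction hn : G.support.ncard using Nat.strong_induction_on generalizing G with
  | _ n ih =>
  rcases G.support.eq_empty_or_nonempty with hs | hs
  · refine .no_edges (Set.eq_empty_of_forall_notMem fun F hF => ?_)
    obtain ⟨a, ha, b, hb, hab⟩ := Finset.one_lt_card.1 (by rw [hF.card_eq]; omega)
    exact hs.subset ⟨b, hF.isClique ha hb hab⟩
  obtain ⟨v, hvs, hv⟩ := hG.exists_isClique_neighborSet hs
  refine chordalClutter_of_deleteIncidenceSet ht hv (ih _ ?_ (hG.deleteIncidenceSet v) rfl)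
  rw [← hn]
  refine Set.ncard_lt_ncard ((G.support_deleteIncidenceSet_subset v).trans_ssubset ?_)
  exact Set.sdiff_singleton_ssubset.2 hvs

end CliqueClutter

/-- for every chordal graph `G` and every `t ≥ 2`, the `t`-clique
clutter `CH_t(G)` is a chordal clutter. -/
theorem statement16 {V : Type*} [Fintype V] [DecidableEq V]
    (G : SimpleGraph V) (hchordal : IsChordalGraph G) (t : ℕ) (ht : 2 ≤ t) :
    ChordalClutter t (tCliqueClutter G t) := by
  let : LinearOrder V := LinearOrder.lift' _ (Fintype.equivFin V).injective
  -- `convert` identifies the `DecidableEq V` coming from this order with the given one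
  convert hchordal.chordalClutter_tCliqueClutter ht
end

section
/- Let G be a finite simple chordal graph, let t ≥ 2 be an integer, let x₁ be a simplicial vertex of G with deg_G(x₁) = d − 1 ≥ t − 1 and N_G(x₁) = {x₂, …, x_d}. List the (t−1)-element subsets of {x₁, …, x_{d−1}} containing x₁ in lexicographic order as e_1 < e_2 < ⋯ < e_m, where m = C(d−2, t−2), and for 1 ≤ i ≤ m set Ω_i(G) = CH_t(G) ∖ e_1 ∖ ⋯ ∖ e_{i−1}. Then for every 1 ≤ i ≤ m the set e_i is a simplicial maximal subedge of Ω_i(G), and Ω_{m+1}(G) := CH_t(G) ∖ e_1 ∖ ⋯ ∖ e_m equals the t-clique clutter CH_t(G ∖ x₁) of the graph obtained by deleting x₁. -/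
/-- Lexicographic comparison of finite sets of a linear order (for sets of equal
cardinality this is the lexicographic order on the increasing enumerations): the
smallest element where `I` and `J` differ belongs to `I`. -/
def FinsetLexLT {α : Type*} [LinearOrder α] (I J : Finset α) : Prop :=
  ∃ a, a ∈ I ∧ a ∉ J ∧ ∀ b, b < a → (b ∈ I ↔ b ∈ J)

/-
If `e j` (with `j < i`) were contained in a `t`-set `F` spanned by the closed neighbourhood of
`e i`, let `a` be the first index where the index sets of `e j` and `e i` differ; then `x a ∈ F`
is a neighbour of `e i`, so `e i ∪ {x a}` is an edge of `CH_t(G) ∖ e 0 ∖ ⋯ ∖ e (i-1)`.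
Replacing an element of `e i` above `a` by `x a` gives a lexicographically smaller subedge,
i.e. some `e j'` with `j' < i`, inside `e i ∪ {x a}`: a contradiction. All other clauses follow
because the closed neighbourhood `{x 0, …, x (d-1)}` of the simplicial vertex `x 0` is a clique,
and `x (d-1)` lies in no `e i`.
-/

open Finset

namespace FinsetLexLT

variable {α : Type*} [LinearOrder α] {I J : Finset α}

lemma irrefl (I : Finset α) : ¬ FinsetLexLT I I :=
  fun ⟨_, ha, ha', _⟩ => ha' ha

lemma asymm (hIJ : FinsetLexLT I J) : ¬ FinsetLexLT J I := by
  rintro ⟨b, hbJ, hbI, hb⟩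
  obtain ⟨a, haI, haJ, ha⟩ := hIJ
  rcases lt_trichotomy a b with h | rfl | h
  · exact haJ ((hb a h).mpr haI)
  · exact hbI haI
  · exact hbI ((ha b h).mpr hbJ)

lemma insert_erase_of_lt {a w : α} (ha : a ∉ I) (haw : a < w) :
    FinsetLexLT (insert a (I.erase w)) I := by
  refine ⟨a, mem_insert_self _ _, ha, fun b hb => ?_⟩
  simp [mem_insert, mem_erase, hb.ne, (hb.trans haw).ne]

lemma lt_of_strictMono {ι : Type*} [LinearOrder ι] {E : ι → Finset α}
    (hE : ∀ i j, i < j → FinsetLexLT (E i) (E j)) {i j : ι} (h : FinsetLexLT (E i) (E j)) :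
    i < j := by
  refine lt_of_not_ge fun hji => ?_
  rcases hji.lt_or_eq with hji | rfl
  · exact (hE j i hji).asymm h
  · exact irrefl _ h

end FinsetLexLT

lemma Finset.exists_mem_gt_of_card_le {α : Type*} [LinearOrder α] {I J : Finset α} {a : α}
    (haJ : a ∈ J) (haI : a ∉ I) (hbelow : ∀ b < a, b ∈ J ↔ b ∈ I) (hcard : #J ≤ #I) :
    ∃ w ∈ I, a < w := by
  by_contra! hle
  have hsub : I ⊆ J.erase a := fun b hb =>
    mem_erase.2 ⟨ne_of_mem_of_not_mem hb haI,
      (hbelow b ((hle b hb).lt_of_ne (ne_of_mem_of_not_mem hb haI))).2 hb⟩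
  have hle' := card_le_card hsub
  rw [card_erase_of_mem haJ] at hle'
  have hpos := card_pos.2 ⟨a, haJ⟩
  omega

lemma Finset.card_filter_univ_mem_of_subset_range {ι V : Type*} [Fintype ι] [DecidableEq V]
    {x : ι → V} (hx : Function.Injective x) {s : Finset V} (hs : (s : Set V) ⊆ Set.range x) :
    #{k | x k ∈ s} = #s := by
  rw [← card_image_of_injective _ hx]
  congr 1
  ext v
  simp only [mem_image, mem_filter, mem_univ, true_and]
  refine ⟨fun ⟨k, hk, hkv⟩ => hkv ▸ hk, fun hv => ?_⟩
  obtain ⟨k, rfl⟩ := hs hv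
  exact ⟨k, hv, rfl⟩

lemma SimpleGraph.IsClique.subset_of_neighborSet_subset {V : Type*} {G : SimpleGraph V}
    {s K : Set V} {v : V} (hs : G.IsClique s) (hvs : v ∈ s) (hvK : v ∈ K)
    (hN : G.neighborSet v ⊆ K) : s ⊆ K := fun u hu =>
  (eq_or_ne v u).elim (fun h => h ▸ hvK) fun h => hN (hs hvs hu h)

structure IsLexEnumeration {V : Type*} [DecidableEq V] {d m : ℕ} (x : Fin d → V) (h0 : 0 < d)
    (t : ℕ) (e : Fin m → Finset V) : Prop where
  zero_mem : ∀ i, x ⟨0, h0⟩ ∈ e i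
  card_eq : ∀ i, #(e i) = t - 1
  subset : ∀ i, (e i : Set V) ⊆ x '' {k : Fin d | (k : ℕ) < d - 1}
  injective : Function.Injective e
  exists_eq : ∀ f : Finset V, x ⟨0, h0⟩ ∈ f → #f = t - 1 →
    (f : Set V) ⊆ x '' {k : Fin d | (k : ℕ) < d - 1} → ∃ i, e i = f
  lex : ∀ i j, i < j → FinsetLexLT ({k | x k ∈ e i} : Finset (Fin d)) {k | x k ∈ e j}

/-- `CH_t(G) ∖ e 0 ∖ ⋯ ∖ e (i-1)`, the paper's `Ω_{i+1}(G)` (it numbers from `e_1`). -/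
def cliqueClutterDelPrefix {V : Type*} {m : ℕ} (G : SimpleGraph V) (t : ℕ)
    (e : Fin m → Finset V) (i : ℕ) : Set (Finset V) :=
  {F | G.IsNClique t F ∧ ∀ j : Fin m, (j : ℕ) < i → ¬ e j ⊆ F}

namespace IsLexEnumeration

variable {V : Type*} [DecidableEq V] {d m t : ℕ} {h0 : 0 < d} {x : Fin d → V}
  {e : Fin m → Finset V}

lemma subset_range (he : IsLexEnumeration x h0 t e) (i : Fin m) :
    (e i : Set V) ⊆ Set.range x :=
  (he.subset i).trans (Set.image_subset_range _ _)

lemma top_notMem (hx : Function.Injective x) (he : IsLexEnumeration x h0 t e) (i : Fin m) :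
    x ⟨d - 1, by omega⟩ ∉ e i := fun h =>
  lt_irrefl (d - 1) ((hx.mem_set_image).1 (he.subset i h))

lemma exists_earlier_subset_insert (hx : Function.Injective x)
    (he : IsLexEnumeration x h0 t e) {i j : Fin m} (hji : j < i) :
    ∃ v ∈ e j, v ∉ e i ∧ ∃ j' < i, e j' ⊆ insert v (e i) := by
  have hcard (k : Fin m) : #({l | x l ∈ e k} : Finset (Fin d)) = t - 1 :=
    (card_filter_univ_mem_of_subset_range hx (he.subset_range k)).trans (he.card_eq k)
  obtain ⟨a, haj, hai, hbelow⟩ := he.lex j i hji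
  obtain ⟨w, hwi, haw⟩ := exists_mem_gt_of_card_le haj hai hbelow (by rw [hcard, hcard])
  simp only [mem_filter, mem_univ, true_and] at haj hai hwi
  have hw0 : x ⟨0, h0⟩ ≠ x w := hx.ne (Fin.ne_of_val_ne (show 0 ≠ (w : ℕ) by omega))
  obtain ⟨j', hj'⟩ := he.exists_eq (insert (x a) ((e i).erase (x w)))
    (mem_insert_of_mem (mem_erase.2 ⟨hw0, he.zero_mem i⟩))
    (by
      rw [card_insert_of_notMem fun h => hai (mem_of_mem_erase h), card_erase_of_mem hwi,
        he.card_eq]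
      have := he.card_eq i ▸ card_pos.2 ⟨_, hwi⟩
      omega)
    (by
      rw [coe_insert, Set.insert_subset_iff]
      exact ⟨he.subset j haj, fun v hv => he.subset i (mem_of_mem_erase hv)⟩)
  refine ⟨x a, haj, hai, j', FinsetLexLT.lt_of_strictMono he.lex ?_,
    hj' ▸ insert_subset_insert _ (erase_subset _ _)⟩
  have hidx : ({l | x l ∈ e j'} : Finset (Fin d)) =
      insert a (({l | x l ∈ e i} : Finset (Fin d)).erase w) := by
    ext l
    simp [hj', hx.eq_iff]
  rw [hidx]
  exact FinsetLexLT.insert_erase_of_lt (by simpa using hai) haw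

lemma exists_subset_of_card_le (he : IsLexEnumeration x h0 t e) (ht : 2 ≤ t) {s : Finset V}
    (h0s : x ⟨0, h0⟩ ∈ s) (hs : (s : Set V) ⊆ x '' {k : Fin d | (k : ℕ) < d - 1})
    (hcard : t - 1 ≤ #s) : ∃ j, e j ⊆ s := by
  obtain ⟨u, h0u, hus, hu⟩ := exists_subsuperset_card_eq (singleton_subset_iff.2 h0s)
    (n := t - 1) (by rw [card_singleton]; omega) hcard
  obtain ⟨j, rfl⟩ :=
    he.exists_eq u (singleton_subset_iff.1 h0u) hu ((coe_subset.2 hus).trans hs)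
  exact ⟨j, hus⟩

variable {G : SimpleGraph V}

lemma exists_insert_mem_cliqueClutterDelPrefix (hx : Function.Injective x)
    (hK : G.IsClique (Set.range x)) (he : IsLexEnumeration x h0 t e) (i : Fin m) :
    ∃ v, v ∉ e i ∧ insert v (e i) ∈ cliqueClutterDelPrefix G t e i := by
  have htop := he.top_notMem hx i
  refine ⟨_, htop, ⟨hK.subset ?_, ?_⟩, fun j hji hj => ?_⟩
  · rw [coe_insert]
    exact Set.insert_subset (Set.mem_range_self _) (he.subset_range i)
  · rw [card_insert_of_notMem htop, he.card_eq]
    have := he.card_eq i ▸ card_pos.2 ⟨_, he.zero_mem i⟩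
    omega
  · rw [subset_insert_iff_of_notMem (he.top_notMem hx j)] at hj
    have := he.injective (eq_of_subset_of_card_le hj (by rw [he.card_eq, he.card_eq]))
    exact hji.ne (congrArg Fin.val this)

lemma mem_cliqueClutterDelPrefix_of_subset_clutterNbhd (hx : Function.Injective x)
    (hK : G.IsClique (Set.range x)) (hN : G.neighborSet (x ⟨0, h0⟩) ⊆ Set.range x)
    (he : IsLexEnumeration x h0 t e) (i : Fin m) {F : Finset V} (hF : #F = t)
    (hFN : (F : Set V) ⊆ clutterNbhd (cliqueClutterDelPrefix G t e i) (e i)) :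
    F ∈ cliqueClutterDelPrefix G t e i := by
  have hFx : (F : Set V) ⊆ Set.range x := fun v hv => (hFN hv).elim (he.subset_range i ·)
    (fun h => h.1.1.subset_of_neighborSet_subset (by simp [he.zero_mem i])
      (Set.mem_range_self _) hN (by simp))
  refine ⟨⟨hK.subset hFx, hF⟩, fun j hji hjF => ?_⟩
  obtain ⟨v, hvj, hvi, j', hj'i, hj'⟩ := he.exists_earlier_subset_insert hx hji
  exact ((hFN (hjF hvj)).resolve_left hvi).2 j' hj'i hj'

lemma cliqueClutterDelPrefix_eq (hx : Function.Injective x) (ht : 2 ≤ t) (hd : 2 ≤ d)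
    (hN : G.neighborSet (x ⟨0, h0⟩) ⊆ Set.range x) (he : IsLexEnumeration x h0 t e) :
    cliqueClutterDelPrefix G t e m = {F | G.IsNClique t F ∧ x ⟨0, h0⟩ ∉ F} := by
  ext F
  refine ⟨fun ⟨hF, hall⟩ => ⟨hF, fun h0F => ?_⟩, fun ⟨hF, h0F⟩ => ⟨hF, fun j _ hj =>
    h0F (hj (he.zero_mem j))⟩⟩
  have hFx := hF.1.subset_of_neighborSet_subset h0F (Set.mem_range_self _) hN
  obtain ⟨j, hj⟩ := he.exists_subset_of_card_le ht (s := F.erase (x ⟨d - 1, by omega⟩))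
    (mem_erase.2 ⟨hx.ne (Fin.ne_of_val_ne (show 0 ≠ d - 1 by omega)), h0F⟩)
    (fun v hv => by
      obtain ⟨hvtop, hvF⟩ := mem_erase.1 hv
      obtain ⟨k, rfl⟩ := hFx hvF
      refine ⟨k, ?_, rfl⟩
      have : (k : ℕ) ≠ d - 1 := fun h => hvtop (congrArg x (Fin.ext h))
      show (k : ℕ) < d - 1
      omega)
    (by have := hF.2 ▸ pred_card_le_card_erase (s := F) (a := x ⟨d - 1, by omega⟩); omega)
  exact hall j j.isLt (hj.trans (erase_subset _ _))

end IsLexEnumeration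

/-- let `x 0` be a simplicial vertex of the chordal graph `G` with
neighborhood `{x 1, …, x (d-1)}` (so `deg (x 0) = d - 1 ≥ t - 1`), and let
`e 0 < e 1 < ⋯ < e (m-1)` be the lexicographic enumeration of the `(t-1)`-subsets of
`{x 0, …, x (d-2)}` containing `x 0`, where `m = C(d-2, t-2)`. With
`Ω i = CH_t(G) ∖ e 0 ∖ ⋯ ∖ e (i-1) = {F ∈ CH_t(G) | ∀ j < i, ¬ e j ⊆ F}`, each `e i`
is a simplicial maximal subedge of `Ω i`, and `Ω m = CH_t(G ∖ x 0)`, the clutter of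
`t`-cliques of `G` avoiding `x 0`. -/
theorem statement17 {V : Type*} [DecidableEq V]
    (G : SimpleGraph V) (t : ℕ) (ht : 2 ≤ t)
    (d : ℕ) (hd : t ≤ d)
    (x : Fin d → V) (hxinj : Function.Injective x)
    (hsimplicial : G.IsClique (G.neighborSet (x ⟨0, by omega⟩)))
    (hnbhd : G.neighborSet (x ⟨0, by omega⟩) = x '' {i : Fin d | i ≠ ⟨0, by omega⟩})
    (m : ℕ)
    (e : Fin m → Finset V)
    (he_mem : ∀ i : Fin m, x ⟨0, by omega⟩ ∈ e i ∧ (e i).card = t - 1 ∧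
      (↑(e i) : Set V) ⊆ x '' {k : Fin d | (k : ℕ) < d - 1})
    (he_inj : Function.Injective e)
    (he_surj : ∀ f : Finset V, x ⟨0, by omega⟩ ∈ f → f.card = t - 1 →
      (↑f : Set V) ⊆ x '' {k : Fin d | (k : ℕ) < d - 1} → ∃ i, e i = f)
    (he_lex : ∀ i j : Fin m, i < j →
      FinsetLexLT (Finset.univ.filter fun k : Fin d => x k ∈ e i)
        (Finset.univ.filter fun k : Fin d => x k ∈ e j)) :
    (∀ i : Fin m,
      (∃ v, v ∉ e i ∧ insert v (e i) ∈
        {F : Finset V | G.IsNClique t F ∧ ∀ j : Fin m, (j : ℕ) < (i : ℕ) → ¬ e j ⊆ F}) ∧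
      (∀ F : Finset V, F.card = t →
        (↑F : Set V) ⊆ clutterNbhd
          {F : Finset V | G.IsNClique t F ∧ ∀ j : Fin m, (j : ℕ) < (i : ℕ) → ¬ e j ⊆ F}
          (e i) →
        F ∈ {F : Finset V | G.IsNClique t F ∧ ∀ j : Fin m, (j : ℕ) < (i : ℕ) → ¬ e j ⊆ F})) ∧
    {F : Finset V | G.IsNClique t F ∧ ∀ j : Fin m, (j : ℕ) < m → ¬ e j ⊆ F} =
      {F : Finset V | G.IsNClique t F ∧ x ⟨0, by omega⟩ ∉ F} := by
  have he : IsLexEnumeration x (by omega) t e :=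
    ⟨fun i => (he_mem i).1, fun i => (he_mem i).2.1, fun i => (he_mem i).2.2, he_inj, he_surj,
      he_lex⟩
  have hN : G.neighborSet (x ⟨0, by omega⟩) ⊆ Set.range x :=
    hnbhd ▸ Set.image_subset_range _ _
  have hK : G.IsClique (Set.range x) := by
    refine (hsimplicial.insert fun _ hb _ => hb).subset ?_
    rintro _ ⟨k, rfl⟩
    by_cases hk : k = ⟨0, by omega⟩
    · exact hk ▸ Set.mem_insert _ _
    · exact Set.mem_insert_of_mem _ (hnbhd ▸ ⟨k, hk, rfl⟩)
  exact ⟨fun i => ⟨he.exists_insert_mem_cliqueClutterDelPrefix hxinj hK i,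
    fun F hF => he.mem_cliqueClutterDelPrefix_of_subset_clutterNbhd hxinj hK hN i hF⟩,
    he.cliqueClutterDelPrefix_eq hxinj ht (by omega) hN⟩
end
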